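/- Fix an integer m ≥ 2 and let B = ⋃_{j≥1} B_j, where B_j = {n ∈ ℕ : d_j ∣ n and exp(j^m) ≤ n < exp((j+1)^m)}. Then there exists a constant C > 0 such that S(x) ≤ C·x/log log log x for all sufficiently large x, where S(x) = #{n ≤ x : n = p + b for some prime p and some b ∈ B}. -/

import Mathlib

open Filter Real

/-- `dPrimorial j = p_1 p_2 ⋯ p_j`, the product of the first `j` primes
(`Nat.nth Nat.Prime i` is the `(i+1)`-st prime). -/
noncomputable def dPrimorial (j : ℕ) : ℕ := ∏ i ∈ Finset.range j, Nat.nth Nat.Prime i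

/-- `Bset m j = {n ∈ ℕ : d_j ∣ n and exp(j^m) ≤ n < exp((j+1)^m)}`. -/
def Bset (m j : ℕ) : Set ℕ :=
  {n : ℕ | dPrimorial j ∣ n ∧
    Real.exp ((j : ℝ) ^ m) ≤ (n : ℝ) ∧ (n : ℝ) < Real.exp (((j : ℝ) + 1) ^ m)}

/-- `Scount B x = #{n ≤ x : n = p + b, p prime, b ∈ B}`. -/
noncomputable def Scount (B : Set ℕ) (x : ℝ) : ℕ :=
  {n : ℕ | (n : ℝ) ≤ x ∧ ∃ p b : ℕ, p.Prime ∧ b ∈ B ∧ n = p + b}.ncard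

lemma nth_prime_zero_eq : Nat.nth Nat.Prime 0 = 2 := by
  have h2 : Nat.Prime 2 := Nat.prime_two
  have h0 : Nat.count Nat.Prime 2 = 0 := by
    rw [Nat.count_eq_card_filter_range]; decide
  have := Nat.nth_count h2
  rw [h0] at this; exact this

lemma nth_prime_le_two_pow (i : ℕ) : Nat.nth Nat.Prime i ≤ 2 ^ (i + 1) := by
  induction i with
  | zero => rw [nth_prime_zero_eq]; norm_num
  | succ k ih =>
    obtain ⟨p, hp, hlt, hle⟩ := Nat.bertrand (Nat.nth Nat.Prime k)
      (Nat.Prime.pos (Nat.prime_nth_prime k)).ne'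
    have h1 : Nat.nth Nat.Prime (k + 1) ≤ p := by
      by_contra h
      push_neg at h
      exact absurd (Nat.le_nth_of_lt_nth_succ h hp) (by omega)
    calc Nat.nth Nat.Prime (k + 1) ≤ p := h1
      _ ≤ 2 * Nat.nth Nat.Prime k := hle
      _ ≤ 2 * 2 ^ (k + 1) := by omega
      _ = 2 ^ (k + 2) := by ring

lemma dPrimorial_pos (j : ℕ) : 0 < dPrimorial j :=
  Finset.prod_pos fun i _ => (Nat.prime_nth_prime i).pos

lemma two_pow_le_dPrimorial (j : ℕ) : 2 ^ j ≤ dPrimorial j := by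
  have : ∏ _i ∈ Finset.range j, 2 ≤ dPrimorial j :=
    Finset.prod_le_prod' fun i _ => (Nat.prime_nth_prime i).two_le
  simpa using this

lemma dPrimorial_le_two_pow (j : ℕ) : dPrimorial j ≤ 2 ^ (j * j + j) := by
  calc dPrimorial j ≤ ∏ i ∈ Finset.range j, 2 ^ (i + 1) :=
        Finset.prod_le_prod' fun i _ => nth_prime_le_two_pow i
    _ = 2 ^ (∑ i ∈ Finset.range j, (i + 1)) := by rw [← Finset.prod_pow_eq_pow_sum]
    _ ≤ 2 ^ (j * j + j) := by
        apply Nat.pow_le_pow_right (by norm_num)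
        calc ∑ i ∈ Finset.range j, (i + 1) ≤ ∑ _i ∈ Finset.range j, (j + 1) :=
              Finset.sum_le_sum fun i hi => by simp at hi; omega
          _ = j * (j + 1) := by simp [mul_comm]
          _ = j * j + j := by ring

lemma dPrimorial_dvd {k j : ℕ} (h : k ≤ j) : dPrimorial k ∣ dPrimorial j :=
  Finset.prod_dvd_prod_of_subset _ _ _ (Finset.range_subset_range.mpr h)

lemma sum_inv_le_prod (y : ℕ) :
    ∑ i ∈ Finset.Icc 1 y, ((i : ℝ))⁻¹ ≤
      ∏ p ∈ Nat.primesBelow (y + 1), (1 - (p : ℝ)⁻¹)⁻¹ := by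
  set Q := Nat.primesBelow (y + 1) with hQ
  have hsupp : ∀ n : ℕ, n ∈ Finset.Icc 1 y → n.factorization.support ⊆ Q := by
    intro n hn p hp
    rw [Finset.mem_Icc] at hn
    rw [Nat.support_factorization] at hp
    have hple : p ≤ n := Nat.le_of_dvd (by omega) (Nat.dvd_of_mem_primeFactors hp)
    exact Nat.mem_primesBelow.mpr ⟨by omega, Nat.prime_of_mem_primeFactors hp⟩
  have hstep1 : ∑ i ∈ Finset.Icc 1 y, ((i : ℝ))⁻¹ ≤
      ∏ p ∈ Q, ∑ k ∈ Finset.range (y + 1), ((p : ℝ)⁻¹) ^ k := by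
    rw [Finset.prod_sum]
    have hterm : ∀ n ∈ Finset.Icc 1 y,
        (∏ x ∈ Q.attach, ((x.1 : ℝ)⁻¹) ^ (n.factorization x.1)) = (n : ℝ)⁻¹ := by
      intro n hn
      have hn0 : n ≠ 0 := by rw [Finset.mem_Icc] at hn; omega
      have hprodnat : ∏ p ∈ Q, p ^ n.factorization p = n := by
        rw [← Finset.prod_subset (hsupp n hn) (fun p _ hp => by
          rw [Finsupp.notMem_support_iff.mp hp, pow_zero])]
        exact Nat.factorization_prod_pow_eq_self hn0
      calc ∏ x ∈ Q.attach, ((x.1 : ℝ)⁻¹) ^ (n.factorization x.1)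
          = ∏ p ∈ Q, ((p : ℝ)⁻¹) ^ (n.factorization p) :=
            Finset.prod_attach Q (fun p => ((p : ℝ)⁻¹) ^ (n.factorization p))
        _ = (∏ p ∈ Q, (p : ℝ) ^ (n.factorization p))⁻¹ := by
            rw [← Finset.prod_inv_distrib]; simp [inv_pow]
        _ = (n : ℝ)⁻¹ := by
            congr 1
            exact_mod_cast congrArg (Nat.cast (R := ℝ)) hprodnat
    set φ : ℕ → (∀ a ∈ Q, ℕ) := fun n => fun p _ => n.factorization p with hφ
    set F : (∀ a ∈ Q, ℕ) → ℝ := fun g => ∏ x ∈ Q.attach, ((x.1 : ℝ)⁻¹) ^ (g x.1 x.2) with hF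
    have hinj : ∀ n ∈ Finset.Icc 1 y, ∀ n' ∈ Finset.Icc 1 y, φ n = φ n' → n = n' := by
      intro n hn n' hn' h
      have hn0 : n ≠ 0 := by rw [Finset.mem_Icc] at hn; omega
      have hn'0 : n' ≠ 0 := by rw [Finset.mem_Icc] at hn'; omega
      have hfac : n.factorization = n'.factorization := by
        ext p
        by_cases hpQ : p ∈ Q
        · exact congrFun (congrFun h p) hpQ
        · have h1 : p ∉ n.factorization.support := fun hc => hpQ (hsupp n hn hc)
          have h2 : p ∉ n'.factorization.support := fun hc => hpQ (hsupp n' hn' hc)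
          rw [Finsupp.notMem_support_iff.mp h1, Finsupp.notMem_support_iff.mp h2]
      exact Nat.factorization_inj hn0 hn'0 hfac
    have himg : (Finset.Icc 1 y).image φ ⊆ Q.pi (fun _ => Finset.range (y + 1)) := by
      intro g hg
      rw [Finset.mem_image] at hg
      obtain ⟨n, hn, rfl⟩ := hg
      rw [Finset.mem_Icc] at hn
      rw [Finset.mem_pi]
      intro p hp
      rw [Finset.mem_range]
      show n.factorization p < y + 1
      have := Nat.factorization_lt p (show n ≠ 0 by omega)
      omega
    calc ∑ i ∈ Finset.Icc 1 y, ((i : ℝ))⁻¹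
        = ∑ n ∈ Finset.Icc 1 y, F (φ n) := by
          refine Finset.sum_congr rfl fun n hn => ?_
          exact (hterm n hn).symm
      _ = ∑ g ∈ (Finset.Icc 1 y).image φ, F g :=
          (Finset.sum_image hinj).symm
      _ ≤ ∑ g ∈ Q.pi (fun _ => Finset.range (y + 1)), F g := by
          refine Finset.sum_le_sum_of_subset_of_nonneg himg fun g _ _ => ?_
          exact Finset.prod_nonneg fun x _ => pow_nonneg (by positivity) _
  refine hstep1.trans (Finset.prod_le_prod ?_ ?_)
  · intro p _
    exact Finset.sum_nonneg fun k _ => pow_nonneg (by positivity) _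
  · intro p hp
    have hp2 : 2 ≤ p := (Nat.prime_of_mem_primesBelow hp).two_le
    have h0 : (0:ℝ) ≤ (p:ℝ)⁻¹ := by positivity
    have h1 : (p:ℝ)⁻¹ < 1 := by
      rw [inv_lt_one_iff₀]; right; exact_mod_cast by omega
    exact sum_le_hasSum _ (fun k _ => pow_nonneg h0 k) (hasSum_geometric_of_lt_one h0 h1)

lemma primesBelow_nth (k : ℕ) :
    Nat.primesBelow (Nat.nth Nat.Prime k + 1) =
      (Finset.range (k + 1)).image (Nat.nth Nat.Prime) := by
  ext p
  simp only [Nat.mem_primesBelow, Finset.mem_image, Finset.mem_range]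
  constructor
  · rintro ⟨hlt, hp⟩
    refine ⟨Nat.count Nat.Prime p, ?_, Nat.nth_count hp⟩
    have : Nat.count Nat.Prime p ≤ k := by
      by_contra hc
      push_neg at hc
      have h2 := (Nat.nth_lt_nth (p := Nat.Prime) Nat.infinite_setOf_prime).mpr hc
      rw [Nat.nth_count hp] at h2
      omega
    omega
  · rintro ⟨i, hi, rfl⟩
    have h1 : Nat.nth Nat.Prime i ≤ Nat.nth Nat.Prime k :=
      (Nat.nth_le_nth (p := Nat.Prime) Nat.infinite_setOf_prime).mpr (by omega)
    exact ⟨by omega, Nat.prime_nth_prime i⟩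

lemma dPrimorial_eq_prod (k : ℕ) :
    dPrimorial (k + 1) = ∏ p ∈ Nat.primesBelow (Nat.nth Nat.Prime k + 1), p := by
  rw [primesBelow_nth, Finset.prod_image]
  · rfl
  · intro a _ b _ h
    exact Nat.nth_injective Nat.infinite_setOf_prime h

lemma totient_dPrimorial_le (k : ℕ) :
    (Nat.totient (dPrimorial (k + 1)) : ℝ) * Real.log (k + 2) ≤ (dPrimorial (k + 1) : ℝ) := by
  set y := Nat.nth Nat.Prime k with hy
  set Q := Nat.primesBelow (y + 1) with hQ
  have hprime : ∀ p ∈ Q, Nat.Prime p := fun p hp => Nat.prime_of_mem_primesBelow hp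
  have hD : dPrimorial (k + 1) = ∏ p ∈ Q, p := dPrimorial_eq_prod k
  -- totient formula
  have htot : (Nat.totient (dPrimorial (k + 1)) : ℝ) =
      (dPrimorial (k + 1) : ℝ) * ∏ p ∈ Q, (1 - (p : ℝ)⁻¹) := by
    have h := Nat.totient_eq_mul_prod_factors (dPrimorial (k + 1))
    rw [hD] at h ⊢
    rw [Nat.primeFactors_prod hprime] at h
    have h2 := congrArg (fun q : ℚ => (q : ℝ)) h
    push_cast at h2 ⊢
    exact h2
  -- the product bound
  have hpos : ∀ p ∈ Q, (0:ℝ) < 1 - (p : ℝ)⁻¹ := by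
    intro p hp
    have h2 : 2 ≤ p := (hprime p hp).two_le
    have : (p:ℝ)⁻¹ < 1 := by
      rw [inv_lt_one_iff₀]; right; exact_mod_cast by omega
    linarith
  have hprodpos : (0:ℝ) < ∏ p ∈ Q, (1 - (p : ℝ)⁻¹) := Finset.prod_pos hpos
  have hlogpos : (0:ℝ) < Real.log (y + 1) := by
    have : 2 ≤ y := (Nat.prime_nth_prime k).two_le
    apply Real.log_pos
    have : (2:ℝ) ≤ (y:ℝ) := by exact_mod_cast this
    linarith
  have hharm : Real.log (y + 1) ≤ ∏ p ∈ Q, (1 - (p : ℝ)⁻¹)⁻¹ := by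
    calc Real.log (y + 1) = Real.log ((y : ℕ) + 1 : ℕ) := by push_cast; ring_nf
      _ ≤ (harmonic y : ℝ) := log_add_one_le_harmonic y
      _ = ∑ i ∈ Finset.Icc 1 y, ((i : ℝ))⁻¹ := by
          rw [harmonic_eq_sum_Icc]; push_cast; rfl
      _ ≤ ∏ p ∈ Q, (1 - (p : ℝ)⁻¹)⁻¹ := sum_inv_le_prod y
  have hinvprod : ∏ p ∈ Q, (1 - (p : ℝ)⁻¹)⁻¹ = (∏ p ∈ Q, (1 - (p : ℝ)⁻¹))⁻¹ :=
    Finset.prod_inv_distrib _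
  have hbound : ∏ p ∈ Q, (1 - (p : ℝ)⁻¹) ≤ (Real.log (y + 1))⁻¹ := by
    rw [hinvprod] at hharm
    calc ∏ p ∈ Q, (1 - (p : ℝ)⁻¹) = ((∏ p ∈ Q, (1 - (p : ℝ)⁻¹))⁻¹)⁻¹ := by rw [inv_inv]
      _ ≤ (Real.log (y + 1))⁻¹ := by
          apply one_div_le_one_div_of_le hlogpos at hharm
          · rw [one_div, one_div] at hharm; exact hharm
  have hyk : Real.log ((k:ℝ) + 2) ≤ Real.log ((y:ℝ) + 1) := by
    apply Real.log_le_log (by positivity)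
    have := Nat.add_two_le_nth_prime k
    have : ((k:ℝ) + 2) ≤ (y:ℝ) := by exact_mod_cast this
    linarith
  have hDpos : (0:ℝ) < (dPrimorial (k + 1) : ℝ) := by
    exact_mod_cast Finset.prod_pos fun i _ => (Nat.prime_nth_prime i).pos
  calc (Nat.totient (dPrimorial (k + 1)) : ℝ) * Real.log (k + 2)
      = (dPrimorial (k + 1) : ℝ) * (∏ p ∈ Q, (1 - (p : ℝ)⁻¹)) * Real.log (k + 2) := by
        rw [htot]
    _ ≤ (dPrimorial (k + 1) : ℝ) * (Real.log (y + 1))⁻¹ * Real.log (y + 1) := by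
        apply mul_le_mul
        · exact mul_le_mul_of_nonneg_left hbound hDpos.le
        · exact hyk
        · exact Real.log_nonneg (by have h := (by positivity : (0:ℝ) ≤ (k:ℝ)); linarith)
        · exact mul_nonneg hDpos.le (inv_nonneg.mpr hlogpos.le)
    _ = (dPrimorial (k + 1) : ℝ) := by
        field_simp

lemma sqrt_real_bounds (N : ℕ) (h : 1 ≤ N) :
    Real.sqrt N - 1 ≤ (Nat.sqrt N : ℝ) ∧ (Nat.sqrt N : ℝ) ≤ Real.sqrt N := by
  constructor
  · have h1 : N < (Nat.sqrt N + 1) ^ 2 := Nat.lt_succ_sqrt' N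
    have h2 : (N:ℝ) < ((Nat.sqrt N : ℝ) + 1) ^ 2 := by exact_mod_cast h1
    have h3 : Real.sqrt N < (Nat.sqrt N : ℝ) + 1 := by
      have := Real.sqrt_lt_sqrt (by positivity) h2
      rwa [Real.sqrt_sq (by positivity)] at this
    linarith
  · have h1 : Nat.sqrt N ^ 2 ≤ N := Nat.sqrt_le' N
    have h2 : ((Nat.sqrt N : ℝ)) ^ 2 ≤ (N:ℝ) := by exact_mod_cast h1
    have := Real.sqrt_le_sqrt h2
    rwa [Real.sqrt_sq (by positivity)] at this

lemma chebyshev (N : ℕ) (hN : 256 ≤ N) :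
    ((Nat.primesBelow N).card : ℝ) ≤ 8 * N / Real.log N := by
  have hNR : (256:ℝ) ≤ (N:ℝ) := by exact_mod_cast hN
  have hlogN : (0:ℝ) < Real.log N := Real.log_pos (by linarith)
  set s := Nat.sqrt N with hs
  obtain ⟨hsl, hsu⟩ := sqrt_real_bounds N (by omega)
  -- v := N^(1/4)
  set v := Real.sqrt (Real.sqrt N) with hv
  have hv4 : 4 ≤ v := by
    have : (4:ℝ) = Real.sqrt (Real.sqrt 256) := by
      rw [show (256:ℝ) = 16^2 by norm_num, Real.sqrt_sq (by norm_num),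
        show (16:ℝ) = 4^2 by norm_num, Real.sqrt_sq (by norm_num)]
    rw [this]
    exact Real.sqrt_le_sqrt (Real.sqrt_le_sqrt hNR)
  -- s ≥ v  (since √N - 1 ≥ v when v ≥ 2)
  have hsv : v ≤ (s:ℝ) := by
    have hvv : v * v = Real.sqrt N := Real.mul_self_sqrt (Real.sqrt_nonneg _)
    nlinarith [hsl]
  have hlogs : Real.log N / 4 ≤ Real.log s := by
    have hlogv : Real.log v = Real.log N / 4 := by
      rw [hv, Real.log_sqrt (Real.sqrt_nonneg _), Real.log_sqrt (by positivity)]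
      ring
    rw [← hlogv]
    exact Real.log_le_log (by linarith) hsv
  -- split primes
  set S := (Nat.primesBelow N).filter (fun p => s ≤ p) with hS
  set T := (Nat.primesBelow N).filter (fun p => ¬ (s ≤ p)) with hT
  have hsplit : (Nat.primesBelow N).card = S.card + T.card := by
    rw [hS, hT]; exact (Finset.card_filter_add_card_filter_not _).symm
  -- T bound: T ⊆ range s
  have hTcard : T.card ≤ s := by
    calc T.card ≤ (Finset.range s).card := by
          apply Finset.card_le_card
          intro p hp
          rw [hT, Finset.mem_filter] at hp
          rw [Finset.mem_range]; omega
      _ = s := Finset.card_range s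
  -- S bound via primorial
  have hprod : ∏ p ∈ S, p ≤ 4 ^ N := by
    calc ∏ p ∈ S, p ≤ ∏ p ∈ Nat.primesBelow N, p := by
          apply Finset.prod_le_prod_of_subset_of_one_le' (Finset.filter_subset _ _)
          intro p hp _
          exact (Nat.prime_of_mem_primesBelow hp).one_lt.le
      _ = primorial (N - 1) := by
          rw [primorial, Nat.primesBelow, show N - 1 + 1 = N by omega]
      _ ≤ 4 ^ (N - 1) := primorial_le_4_pow _
      _ ≤ 4 ^ N := Nat.pow_le_pow_right (by norm_num) (by omega)
  have hpow : s ^ S.card ≤ 4 ^ N := by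
    calc s ^ S.card ≤ ∏ p ∈ S, p := by
          apply Finset.pow_card_le_prod
          intro p hp
          rw [hS, Finset.mem_filter] at hp
          exact hp.2
      _ ≤ 4 ^ N := hprod
  have hScard : (S.card : ℝ) ≤ 6 * N / Real.log N := by
    have hcast : ((s:ℝ)) ^ S.card ≤ (4:ℝ) ^ N := by exact_mod_cast hpow
    have hs1 : (1:ℝ) < (s:ℝ) := by linarith
    have hlog : (S.card : ℝ) * Real.log s ≤ (N:ℝ) * Real.log 4 := by
      have := Real.log_le_log (by positivity) hcast
      rwa [Real.log_pow, Real.log_pow] at this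
    have hlogspos : (0:ℝ) < Real.log s := Real.log_pos hs1
    have h4 : Real.log 4 < 3/2 := by
      rw [show (4:ℝ) = 2^2 by norm_num, Real.log_pow]
      have := Real.log_two_lt_d9
      push_cast
      nlinarith
    have hc : (S.card : ℝ) * (Real.log N / 4) ≤ (N:ℝ) * (3/2) := by
      calc (S.card : ℝ) * (Real.log N / 4) ≤ (S.card : ℝ) * Real.log s := by
            apply mul_le_mul_of_nonneg_left hlogs (by positivity)
        _ ≤ (N:ℝ) * Real.log 4 := hlog
        _ ≤ (N:ℝ) * (3/2) := by nlinarith [h4, hNR]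
    rw [le_div_iff₀ hlogN]
    nlinarith [hc, hlogN]
  -- small part: s ≤ 2N / log N
  have hTR : (T.card : ℝ) ≤ 2 * N / Real.log N := by
    have h1 : (T.card : ℝ) ≤ (s:ℝ) := by exact_mod_cast hTcard
    have hlog2 : Real.log N ≤ 2 * Real.sqrt N := by
      have := Real.log_le_sub_one_of_pos (show (0:ℝ) < Real.sqrt N by positivity)
      have hls : Real.log (Real.sqrt N) = Real.log N / 2 := Real.log_sqrt (by positivity)
      linarith [this, hls.symm.le]
    have hsq : Real.sqrt N * Real.sqrt N = (N:ℝ) := Real.mul_self_sqrt (by positivity)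
    rw [le_div_iff₀ hlogN]
    nlinarith [mul_le_mul_of_nonneg_right (h1.trans hsu) hlogN.le,
      mul_le_mul_of_nonneg_left hlog2 (Real.sqrt_nonneg (N:ℝ)), hsq]
  have : ((Nat.primesBelow N).card : ℝ) = (S.card : ℝ) + (T.card : ℝ) := by
    exact_mod_cast congrArg (Nat.cast (R := ℝ)) hsplit
  rw [this, le_div_iff₀ hlogN]
  nlinarith [(le_div_iff₀ hlogN).mp hScard, (le_div_iff₀ hlogN).mp hTR]

lemma coprime_count (d n : ℕ) (hd : 0 < d) :
    ((Finset.range n).filter (fun x => Nat.Coprime x d)).card ≤ d.totient * (n / d + 1) := by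
  have h := Nat.Ico_filter_coprime_le (a := d) 0 n hd.ne'
  rw [zero_add] at h
  calc ((Finset.range n).filter (fun x => Nat.Coprime x d)).card
      = ((Finset.Ico 0 n).filter (fun x => d.Coprime x)).card := by
        rw [Finset.range_eq_Ico]
        congr 1
        apply Finset.filter_congr
        intro x _
        simp [Nat.coprime_comm]
    _ ≤ d.totient * (n / d + 1) := h

lemma multiples_count (d n : ℕ) (hd : 0 < d) :
    ((Finset.range (n + 1)).filter (fun x => d ∣ x)).card ≤ n / d + 1 := by
  have hr : Finset.range (n + 1) = insert 0 (Finset.Ioc 0 n) := by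
    ext x
    simp [Finset.mem_range, Finset.mem_Ioc, Finset.mem_insert]
  rw [hr, Finset.filter_insert]
  simp only [dvd_zero, if_true]
  calc (insert 0 ((Finset.Ioc 0 n).filter (fun x => d ∣ x))).card
      ≤ ((Finset.Ioc 0 n).filter (fun x => d ∣ x)).card + 1 := Finset.card_insert_le _ _
    _ = n / d + 1 := by rw [Nat.Ioc_filter_dvd_card_eq_div]

lemma sq_le_two_pow {k : ℕ} (hk : 4 ≤ k) : k * k ≤ 2 ^ k := by
  induction k with
  | zero => omega
  | succ n ih =>
    rcases Nat.lt_or_ge n 4 with h | h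
    · interval_cases n <;> first | omega | norm_num
    · have h1 := ih h
      have h2 : (n+1) * (n+1) ≤ 2 * (n * n) := by nlinarith
      calc (n+1)*(n+1) ≤ 2 * (n*n) := h2
        _ ≤ 2 * 2 ^ n := by omega
        _ = 2 ^ (n+1) := by ring
set_option maxHeartbeats 2000000 in
theorem stmt_15 (m : ℕ) (hm : 2 ≤ m) :
    ∃ C : ℝ, 0 < C ∧ ∀ᶠ x : ℝ in atTop,
      (Scount (⋃ j ∈ {j : ℕ | 1 ≤ j}, Bset m j) x : ℝ) ≤
        C * (x / Real.log (Real.log (Real.log x))) := by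
  refine ⟨4 * m + 4, by positivity, ?_⟩
  have hsqrtT : Tendsto Real.sqrt atTop atTop := by
    apply Filter.tendsto_atTop_atTop.mpr
    intro b
    refine ⟨max 0 (b*b), fun a ha => ?_⟩
    have h1 : b*b ≤ a := le_trans (le_max_right _ _) ha
    rcases le_or_gt b 0 with hb | hb
    · exact le_trans hb (Real.sqrt_nonneg a)
    · have h2 := Real.sqrt_le_sqrt h1
      rwa [Real.sqrt_mul_self hb.le] at h2
  have hA : Tendsto (fun x : ℝ => Real.sqrt (Real.sqrt (Real.log x))) atTop atTop :=
    hsqrtT.comp (hsqrtT.comp Real.tendsto_log_atTop)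
  have hB : Tendsto (fun x : ℝ => Real.sqrt (Real.sqrt x)) atTop atTop := hsqrtT.comp hsqrtT
  have hC : Tendsto (fun x : ℝ => Real.log (Real.log (Real.log x))) atTop atTop :=
    Real.tendsto_log_atTop.comp (Real.tendsto_log_atTop.comp Real.tendsto_log_atTop)
  filter_upwards [eventually_ge_atTop (256 : ℝ), hA.eventually_ge_atTop 128,
    hB.eventually_ge_atTop 128, hC.eventually_ge_atTop (16 * (m:ℝ)^2)] with x hx256 hx2 hx3 hx4
  set L1 := Real.log x with hL1def
  set L2 := Real.log L1 with hL2def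
  set L := Real.log L2 with hLdef
  have hx1 : (1:ℝ) ≤ x := by linarith
  have hxpos : (0:ℝ) < x := by linarith
  have hx0 : (0:ℝ) ≤ x := le_of_lt hxpos
  set v := Real.sqrt (Real.sqrt L1) with hvdef
  set w := Real.sqrt L1 with hwdef
  have hw0 : (0:ℝ) ≤ w := Real.sqrt_nonneg _
  have hv0 : (0:ℝ) ≤ v := Real.sqrt_nonneg _
  have hv : (128:ℝ) ≤ v := hx2
  have hL1nonneg : (0:ℝ) ≤ L1 := Real.log_nonneg hx1
  have hvv : v * v = w := Real.mul_self_sqrt hw0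
  have hww : w * w = L1 := Real.mul_self_sqrt hL1nonneg
  have hwbig : (128:ℝ) ≤ w := by nlinarith only [hvv, hv, hv0]
  have hL1gt1 : (2:ℝ) < L1 := by nlinarith only [hww, hwbig]
  have hL1pos : (0:ℝ) < L1 := by linarith
  have hL2pos : (0:ℝ) < L2 := Real.log_pos (by linarith)
  have hexpL : Real.exp L = L2 := Real.exp_log hL2pos
  have hexpL2 : Real.exp L2 = L1 := Real.exp_log hL1pos
  have hm2 : (2:ℝ) ≤ (m:ℝ) := by exact_mod_cast hm
  have hLbig : 16 * (m:ℝ)^2 ≤ L := hx4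
  have hLpos : (0:ℝ) < L := by nlinarith only [hLbig, hm2]
  have hL64 : (64:ℝ) ≤ L := by nlinarith only [hLbig, hm2]
  have hLL2 : L ≤ L2 := by
    have h := Real.log_le_sub_one_of_pos hL2pos
    linarith
  have hL2L1 : L2 ≤ L1 := by
    have h := Real.log_le_sub_one_of_pos hL1pos
    linarith
  have hvpos : (0:ℝ) < v := by linarith
  have hwpos : (0:ℝ) < w := by linarith
  have hL2v : L2 ≤ 4 * v := by
    have e1 : L2 = 2 * Real.log w := by
      rw [hL2def, ← hww, Real.log_mul hwpos.ne' hwpos.ne']; ring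
    have e2 : Real.log w = 2 * Real.log v := by
      rw [← hvv, Real.log_mul hvpos.ne' hvpos.ne']; ring
    have e3 : Real.log v ≤ v - 1 := Real.log_le_sub_one_of_pos hvpos
    linarith
  set v2 := Real.sqrt (Real.sqrt x) with hv2def
  set w2 := Real.sqrt x with hw2def
  have hv2 : (128:ℝ) ≤ v2 := hx3
  have hv2pos : (0:ℝ) < v2 := by linarith
  have hvv2 : v2 * v2 = w2 := Real.mul_self_sqrt (Real.sqrt_nonneg _)
  have hww2 : w2 * w2 = x := Real.mul_self_sqrt hx0
  have hw2pos : (0:ℝ) < w2 := by nlinarith only [hvv2, hv2, hv2pos]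
  have hL1v2 : L1 ≤ 4 * v2 := by
    have e1 : L1 = 2 * Real.log w2 := by
      rw [hL1def, ← hww2, Real.log_mul hw2pos.ne' hw2pos.ne']; ring
    have e2 : Real.log w2 = 2 * Real.log v2 := by
      rw [← hvv2, Real.log_mul hv2pos.ne' hv2pos.ne']; ring
    have e3 : Real.log v2 ≤ v2 - 1 := Real.log_le_sub_one_of_pos hv2pos
    linarith
  have hxL4 : 4 * L1 * L ≤ x := by
    have hL4v2 : L ≤ 4 * v2 := by linarith
    have hLp : (0:ℝ) ≤ L := hLpos.le
    have h1 : 4 * L1 * L ≤ 64 * (v2 * v2) := by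
      nlinarith only [hL4v2, hL1v2, hLp, hL1nonneg, hv2pos]
    have h64 : (64:ℝ) ≤ v2 * v2 := by nlinarith only [hv2, hv2pos]
    have h2 : (64:ℝ) * (v2 * v2) ≤ (v2*v2) * (v2*v2) := by
      nlinarith only [h64, hv2pos]
    have h3 : (v2*v2) * (v2*v2) = x := by rw [hvv2]; exact hww2
    linarith
  set u := Real.sqrt L2 with hudef
  have hu0 : (0:ℝ) ≤ u := Real.sqrt_nonneg _
  have huu : u * u = L2 := Real.mul_self_sqrt hL2pos.le
  have hL2big : (4:ℝ)^(m+1) ≤ L2 := by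
    have h1 : ((4:ℝ))^(m+1) = Real.exp (Real.log ((4:ℝ)^(m+1))) :=
      (Real.exp_log (by positivity)).symm
    have hlog4 : Real.log 4 ≤ 3/2 := by
      rw [show (4:ℝ) = 2^2 by norm_num, Real.log_pow]
      push_cast
      nlinarith only [Real.log_two_lt_d9]
    have hlog4' : (0:ℝ) ≤ Real.log 4 := Real.log_nonneg (by norm_num)
    rw [h1, ← hexpL]
    apply Real.exp_le_exp.mpr
    rw [Real.log_pow]
    push_cast
    nlinarith only [hlog4, hlog4', hm2, hLbig]
  have hu2m : (2:ℝ)^(m+1) ≤ u := by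
    have h1 : ((2:ℝ)^(m+1)) * ((2:ℝ)^(m+1)) = 4^(m+1) := by
      rw [← mul_pow]; norm_num
    nlinarith only [h1, hL2big, huu, hu0, pow_pos (show (0:ℝ) < 2 by norm_num) (m+1)]
  have hu8 : (8:ℝ) ≤ u := by
    have h1 : (8:ℝ) ≤ 2^(m+1) := by
      calc (8:ℝ) = 2^3 := by norm_num
        _ ≤ 2^(m+1) := by
            apply pow_le_pow_right₀ (by norm_num)
            omega
    linarith
  have huL2 : u ≤ L2 := by nlinarith only [huu, hu8, hu0]
  have hmpos : (0:ℝ) < (m:ℝ) := by linarith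
  set J := ⌊Real.exp (L / (2*(m:ℝ)))⌋₊ with hJdef
  set K := J + 1 with hKdef
  have hexp1 : (1:ℝ) ≤ Real.exp (L/(2*(m:ℝ))) := Real.one_le_exp (by positivity)
  have hKub : (K:ℝ) ≤ 2 * Real.exp (L/(2*(m:ℝ))) := by
    have h1 : (J:ℝ) ≤ Real.exp (L/(2*(m:ℝ))) := Nat.floor_le (by positivity)
    push_cast [hKdef]
    linarith
  have hKlb : Real.exp (L/(2*(m:ℝ))) ≤ (K:ℝ) := by
    have h1 := Nat.lt_floor_add_one (Real.exp (L/(2*(m:ℝ))))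
    push_cast [hKdef]
    linarith
  have hK1 : (1:ℝ) ≤ (K:ℝ) := le_trans hexp1 hKlb
  have hlogK : L/(2*(m:ℝ)) ≤ Real.log K := by
    calc L/(2*(m:ℝ)) = Real.log (Real.exp (L/(2*(m:ℝ)))) := (Real.log_exp _).symm
      _ ≤ Real.log K := Real.log_le_log (Real.exp_pos _) hKlb
  have hexphalf : Real.exp (L/2) = u := by
    have h1 : Real.exp (L/2) * Real.exp (L/2) = L2 := by
      rw [← Real.exp_add, show L/2 + L/2 = L by ring]; exact hexpL
    rw [hudef, ← h1, Real.sqrt_mul_self (Real.exp_pos _).le]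
  have hexphalf2 : Real.exp (L2/2) = w := by
    have h1 : Real.exp (L2/2) * Real.exp (L2/2) = L1 := by
      rw [← Real.exp_add, show L2/2 + L2/2 = L2 by ring]; exact hexpL2
    rw [hwdef, ← h1, Real.sqrt_mul_self (Real.exp_pos _).le]
  have hKL : L ≤ (K:ℝ) := by
    have hs0 : (0:ℝ) ≤ L/(2*(m:ℝ)) := by positivity
    have h1 : L/(2*(m:ℝ))/2 + 1 ≤ Real.exp (L/(2*(m:ℝ))/2) := Real.add_one_le_exp _
    have h2 : Real.exp (L/(2*(m:ℝ))/2) * Real.exp (L/(2*(m:ℝ))/2) = Real.exp (L/(2*(m:ℝ))) := by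
      rw [← Real.exp_add]; ring_nf
    have h3 : (L/(2*(m:ℝ))) * (L/(2*(m:ℝ))) / 4 ≤ Real.exp (L/(2*(m:ℝ))) := by
      nlinarith only [h1, h2, hs0]
    have h4 : L ≤ (L/(2*(m:ℝ))) * (L/(2*(m:ℝ))) / 4 := by
      rw [div_mul_div_comm, div_div, le_div_iff₀ (by positivity : (0:ℝ) < 2*(m:ℝ)*(2*(m:ℝ))*4)]
      nlinarith only [hLbig, hLpos, hm2]
    linarith [hKlb]
  have hK4 : 4 ≤ K := by
    have h1 : (4:ℝ) ≤ (K:ℝ) := by linarith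
    exact_mod_cast h1
  have hKm : ((K:ℝ))^m ≤ L2 / 2 := by
    have h1 : ((K:ℝ))^m ≤ (2 * Real.exp (L/(2*(m:ℝ))))^m :=
      pow_le_pow_left₀ (by positivity) hKub m
    have h2 : (2 * Real.exp (L/(2*(m:ℝ))))^m = 2^m * Real.exp (L/2) := by
      rw [mul_pow, ← Real.exp_nat_mul, show (m:ℝ) * (L/(2*(m:ℝ))) = L/2 by
        field_simp]
    rw [h2, hexphalf] at h1
    have hp2 : (0:ℝ) < 2^m := pow_pos (by norm_num) m
    have he : (2:ℝ)^(m+1) = 2 * 2^m := by ring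
    have h3 : (2:ℝ)^m * u ≤ u * u / 2 := by
      nlinarith only [hu2m, hu0, hp2, he]
    rw [huu] at h3
    linarith
  have hKsq : ((K:ℝ)) * (K:ℝ) ≤ 4 * u := by
    have hd1 : L/(2*(m:ℝ)) ≤ L/4 := by
      apply div_le_div_of_nonneg_left hLpos.le (by norm_num)
      linarith
    have h2 : (K:ℝ) ≤ 2 * Real.exp (L/4) := le_trans hKub (by
      have h := Real.exp_le_exp.mpr hd1
      linarith)
    have h3 : Real.exp (L/4) * Real.exp (L/4) = Real.exp (L/2) := by
      rw [← Real.exp_add]; ring_nf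
    have h4 : ((K:ℝ)) * (K:ℝ) ≤ 4 * Real.exp (L/2) := by
      nlinarith only [h2, h3, Real.exp_pos (L/4), hK1]
    rw [hexphalf] at h4
    exact h4
  -- basic N, D, E
  set E := ⌊Real.exp (((K:ℕ):ℝ)^m)⌋₊ + 1 with hEdef
  have hEub : (E:ℝ) ≤ Real.exp (((K:ℝ))^m) + 1 := by
    have h1 : (⌊Real.exp (((K:ℕ):ℝ)^m)⌋₊ : ℝ) ≤ Real.exp (((K:ℝ))^m) :=
      Nat.floor_le (Real.exp_pos _).le
    rw [hEdef]
    push_cast at h1 ⊢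
    linarith
  have hEw : (E:ℝ) ≤ w + 1 := by
    have h1 : Real.exp (((K:ℝ))^m) ≤ Real.exp (L2/2) := Real.exp_le_exp.mpr (by linarith)
    rw [hexphalf2] at h1
    linarith
  set N := ⌊x⌋₊ with hNdef
  have hNx : (N:ℝ) ≤ x := Nat.floor_le hx0
  have hxN : x < (N:ℝ) + 1 := Nat.lt_floor_add_one x
  have hN256 : 256 ≤ N := Nat.le_floor (by exact_mod_cast hx256)
  set D := dPrimorial K with hDdef
  have hDpos : 0 < D := dPrimorial_pos K
  -- the three finsets
  set FA := ((Nat.primesBelow (N+1)) ×ˢ Finset.range E).image (fun q : ℕ × ℕ => q.1 + q.2)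
    with hFA
  set FB1 := (Finset.range (N+1)).filter (fun n => Nat.Coprime n D) with hFB1
  set FB2 := (((Finset.range K).image (Nat.nth Nat.Prime)) ×ˢ
      ((Finset.range (N+1)).filter (fun b => D ∣ b))).image (fun q : ℕ × ℕ => q.1 + q.2)
    with hFB2
  -- the covering
  have hsub : {n : ℕ | (n : ℝ) ≤ x ∧ ∃ p b : ℕ, p.Prime ∧
      b ∈ (⋃ j ∈ {j : ℕ | 1 ≤ j}, Bset m j) ∧ n = p + b} ⊆ ↑(FA ∪ FB1 ∪ FB2) := by
    rintro n ⟨hnx, p, b, hp, hbU, rfl⟩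
    simp only [Set.mem_iUnion, Set.mem_setOf_eq, exists_prop] at hbU
    obtain ⟨j, hj1, hdvd, hblb, hbub⟩ := hbU
    have hnN : p + b ≤ N := Nat.le_floor (by exact_mod_cast hnx)
    have hpN : p < N + 1 := by omega
    have hbN : b < N + 1 := by omega
    rw [Finset.coe_union, Finset.coe_union]
    by_cases hcase : j ≤ J
    · refine Set.mem_union_left _ (Set.mem_union_left _ ?_)
      rw [Finset.mem_coe, hFA, Finset.mem_image]
      refine ⟨(p, b), ?_, rfl⟩
      rw [Finset.mem_product]
      refine ⟨Nat.mem_primesBelow.mpr ⟨hpN, hp⟩, ?_⟩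
      rw [Finset.mem_range]
      have hjK : ((j:ℝ) + 1)^m ≤ ((K:ℝ))^m := by
        apply pow_le_pow_left₀ (by positivity)
        have h1 : (j:ℝ) + 1 ≤ (K:ℝ) := by
          have : j + 1 ≤ K := by omega
          exact_mod_cast this
        exact h1
      have h1 : (b:ℝ) < Real.exp (((K:ℝ))^m) := lt_of_lt_of_le hbub (Real.exp_le_exp.mpr hjK)
      have h2 : Real.exp (((K:ℝ))^m) < (⌊Real.exp (((K:ℕ):ℝ)^m)⌋₊ : ℝ) + 1 :=
        Nat.lt_floor_add_one _
      have h3 : (b:ℝ) < (E:ℝ) := by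
        rw [hEdef]
        push_cast at h1 h2 ⊢
        linarith
      exact_mod_cast h3
    · push_neg at hcase
      have hDb : D ∣ b := dvd_trans (dPrimorial_dvd (show K ≤ j by omega)) hdvd
      by_cases hco : Nat.Coprime (p + b) D
      · refine Set.mem_union_left _ (Set.mem_union_right _ ?_)
        rw [Finset.mem_coe, hFB1, Finset.mem_filter, Finset.mem_range]
        exact ⟨by omega, hco⟩
      · refine Set.mem_union_right _ ?_
        obtain ⟨q, hqprime, hqdvd⟩ := Nat.exists_prime_and_dvd
          (show Nat.gcd (p+b) D ≠ 1 from hco)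
        have hqn : q ∣ p + b := hqdvd.trans (Nat.gcd_dvd_left _ _)
        have hqD : q ∣ D := hqdvd.trans (Nat.gcd_dvd_right _ _)
        have hqb : q ∣ b := hqD.trans hDb
        have hqp : q ∣ p := (Nat.dvd_add_iff_left hqb).mpr hqn
        have hqep : q = p := (Nat.prime_dvd_prime_iff_eq hqprime hp).mp hqp
        have hpD : p ∣ D := by rw [← hqep]; exact hqD
        have hpD' : p ∣ ∏ i ∈ Finset.range K, Nat.nth Nat.Prime i := hpD
        obtain ⟨i, hiK, hdvd2⟩ := (Nat.Prime.prime hp).exists_mem_finset_dvd hpD'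
        have hpeq : p = Nat.nth Nat.Prime i :=
          (Nat.prime_dvd_prime_iff_eq hp (Nat.prime_nth_prime i)).mp hdvd2
        rw [Finset.mem_coe, hFB2, Finset.mem_image]
        refine ⟨(p, b), ?_, rfl⟩
        rw [Finset.mem_product]
        constructor
        · rw [Finset.mem_image]
          exact ⟨i, hiK, hpeq.symm⟩
        · rw [Finset.mem_filter, Finset.mem_range]
          exact ⟨by omega, hDb⟩
  -- counting
  have hScount : (Scount (⋃ j ∈ {j : ℕ | 1 ≤ j}, Bset m j) x : ℝ) ≤
      (FA.card : ℝ) + (FB1.card : ℝ) + (FB2.card : ℝ) := by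
    have h1 : Scount (⋃ j ∈ {j : ℕ | 1 ≤ j}, Bset m j) x ≤ (FA ∪ FB1 ∪ FB2).card := by
      rw [Scount]
      calc _ ≤ (↑(FA ∪ FB1 ∪ FB2) : Set ℕ).ncard :=
            Set.ncard_le_ncard hsub (Finset.finite_toSet _)
        _ = (FA ∪ FB1 ∪ FB2).card := Set.ncard_coe_finset _
    have h2 : (FA ∪ FB1 ∪ FB2).card ≤ FA.card + FB1.card + FB2.card := by
      calc (FA ∪ FB1 ∪ FB2).card ≤ (FA ∪ FB1).card + FB2.card := Finset.card_union_le _ _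
        _ ≤ FA.card + FB1.card + FB2.card := by
            have := Finset.card_union_le FA FB1
            omega
    have h3 := le_trans h1 h2
    exact_mod_cast h3
  -- Part A estimate
  have hApart : (FA.card : ℝ) ≤ x / L := by
    have hcard : FA.card ≤ (Nat.primesBelow (N+1)).card * E := by
      calc FA.card ≤ ((Nat.primesBelow (N+1)) ×ˢ Finset.range E).card := Finset.card_image_le
        _ = (Nat.primesBelow (N+1)).card * E := by
            rw [Finset.card_product, Finset.card_range]
    have hcheb := chebyshev (N+1) (by omega)
    have hlogN : L1 ≤ Real.log ((N:ℝ)+1) := Real.log_le_log hxpos (by linarith)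
    have hlogNpos : (0:ℝ) < Real.log ((N:ℝ)+1) := by linarith
    have h1 : ((Nat.primesBelow (N+1)).card : ℝ) ≤ 8 * ((N:ℝ)+1) / Real.log ((N:ℝ)+1) := by
      have := hcheb
      push_cast at this ⊢
      convert this using 3 <;> push_cast <;> ring
    have h2 : 8 * ((N:ℝ)+1) / Real.log ((N:ℝ)+1) ≤ 16 * x / L1 := by
      apply div_le_div₀ (by positivity) (by linarith) hL1pos hlogN
    have hE0 : (0:ℝ) ≤ (E:ℝ) := by positivity
    have h3 : (FA.card : ℝ) ≤ (16 * x / L1) * (E:ℝ) := by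
      calc (FA.card : ℝ) ≤ ((Nat.primesBelow (N+1)).card : ℝ) * (E:ℝ) := by exact_mod_cast hcard
        _ ≤ (16 * x / L1) * (E:ℝ) := by
            apply mul_le_mul_of_nonneg_right (le_trans h1 h2) hE0
    have h4 : (E:ℝ) ≤ 2*w := by linarith
    have h5 : (FA.card : ℝ) ≤ (16 * x / L1) * (2*w) := by
      refine le_trans h3 (mul_le_mul_of_nonneg_left h4 (by positivity))
    have h6 : (16 * x / L1) * (2*w) ≤ x / L := by
      rw [div_mul_eq_mul_div, div_le_div_iff₀ hL1pos hLpos]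
      have hLw : 32 * L ≤ w := by
        nlinarith only [hLL2, hL2v, hv, hvv, hv0]
      calc 16 * x * (2*w) * L = 32 * L * (x * w) := by ring
        _ ≤ w * (x * w) := by
            apply mul_le_mul_of_nonneg_right hLw (by positivity)
        _ = x * L1 := by rw [← hww]; ring
    linarith
  -- Part B1 estimate
  have hB1part : (FB1.card : ℝ) ≤ 4*(m:ℝ)*(x/L) + x/L := by
    have hc := coprime_count D (N+1) hDpos
    have htot := totient_dPrimorial_le J
    have hlogJ2pos : (0:ℝ) < Real.log ((J:ℝ)+2) := by
      have h1 : Real.log ((K:ℝ)) ≤ Real.log ((J:ℝ)+2) := by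
        apply Real.log_le_log (by linarith)
        push_cast [hKdef]; linarith
      have h2 : (0:ℝ) < L/(2*(m:ℝ)) := by positivity
      linarith [hlogK]
    have hlogJ2 : L/(2*(m:ℝ)) ≤ Real.log ((J:ℝ)+2) := by
      have h1 : Real.log ((K:ℝ)) ≤ Real.log ((J:ℝ)+2) := by
        apply Real.log_le_log (by linarith)
        push_cast [hKdef]; linarith
      linarith [hlogK]
    have hDposR : (0:ℝ) < (D:ℝ) := by exact_mod_cast hDpos
    have htotR : (Nat.totient D : ℝ) * Real.log ((J:ℝ)+2) ≤ (D:ℝ) := by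
      have h1 : (Nat.totient (dPrimorial (J+1)) : ℝ) * Real.log ((J:ℝ) + 2) ≤
          (dPrimorial (J+1) : ℝ) := by
        have := totient_dPrimorial_le J
        push_cast at this ⊢
        convert this using 3 <;> push_cast <;> ring
      exact h1
    have hφle : (Nat.totient D : ℝ) ≤ (D:ℝ) / Real.log ((J:ℝ)+2) := by
      rw [le_div_iff₀ hlogJ2pos]
      exact htotR
    have hcR : (FB1.card : ℝ) ≤ (Nat.totient D : ℝ) * (((N+1)/D : ℕ) + 1 : ℝ) := by
      have h1 : (FB1.card : ℝ) ≤ ((Nat.totient D * ((N+1)/D + 1) : ℕ) : ℝ) := by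
        exact_mod_cast hc
      push_cast at h1
      linarith
    have hdivle : (((N+1)/D : ℕ) : ℝ) ≤ ((N:ℝ)+1) / (D:ℝ) := by
      have := Nat.cast_div_le (α := ℝ) (m := N+1) (n := D)
      push_cast at this
      linarith
    have hφ0 : (0:ℝ) ≤ (Nat.totient D : ℝ) := by positivity
    have hkey : (FB1.card : ℝ) ≤ ((N:ℝ)+1) / Real.log ((J:ℝ)+2) + (D:ℝ) := by
      have h1 : (FB1.card : ℝ) ≤ (Nat.totient D : ℝ) * (((N:ℝ)+1)/(D:ℝ)) + (Nat.totient D : ℝ) := by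
        have h2 : (Nat.totient D : ℝ) * (((N+1)/D : ℕ) + 1 : ℝ) ≤
            (Nat.totient D : ℝ) * (((N:ℝ)+1)/(D:ℝ) + 1) := by
          apply mul_le_mul_of_nonneg_left (by linarith) hφ0
        calc (FB1.card : ℝ) ≤ (Nat.totient D : ℝ) * (((N+1)/D : ℕ) + 1 : ℝ) := hcR
          _ ≤ (Nat.totient D : ℝ) * (((N:ℝ)+1)/(D:ℝ) + 1) := h2
          _ = (Nat.totient D : ℝ) * (((N:ℝ)+1)/(D:ℝ)) + (Nat.totient D : ℝ) := by ring
      have h3 : (Nat.totient D : ℝ) * (((N:ℝ)+1)/(D:ℝ)) ≤ ((N:ℝ)+1) / Real.log ((J:ℝ)+2) := by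
        calc (Nat.totient D : ℝ) * (((N:ℝ)+1)/(D:ℝ))
            ≤ ((D:ℝ) / Real.log ((J:ℝ)+2)) * (((N:ℝ)+1)/(D:ℝ)) := by
              apply mul_le_mul_of_nonneg_right hφle (by positivity)
          _ = ((N:ℝ)+1) / Real.log ((J:ℝ)+2) := by
              field_simp
        
      have h4 : (Nat.totient D : ℝ) ≤ (D:ℝ) := by
        exact_mod_cast Nat.totient_le D
      linarith
    -- (N+1)/log(J+2) ≤ 4m x / L
    have hmain : ((N:ℝ)+1) / Real.log ((J:ℝ)+2) ≤ 4*(m:ℝ)*(x/L) := by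
      have h1 : ((N:ℝ)+1) / Real.log ((J:ℝ)+2) ≤ ((N:ℝ)+1) / (L/(2*(m:ℝ))) := by
        apply div_le_div_of_nonneg_left (by linarith) (by positivity) hlogJ2
      have h2 : ((N:ℝ)+1) / (L/(2*(m:ℝ))) = ((N:ℝ)+1) * (2*(m:ℝ)) / L := by
        field_simp
      have h3 : ((N:ℝ)+1) * (2*(m:ℝ)) / L ≤ 4*(m:ℝ)*(x/L) := by
        rw [div_le_iff₀ hLpos]
        have : ((N:ℝ)+1) ≤ 2*x := by linarith
        calc ((N:ℝ)+1) * (2*(m:ℝ)) ≤ 2*x * (2*(m:ℝ)) := by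
              apply mul_le_mul_of_nonneg_right this (by positivity)
          _ = 4*(m:ℝ)*(x/L)*L := by field_simp; ring
      linarith
    -- D ≤ x / L
    have hDsmall : (D:ℝ) ≤ x / L := by
      have h1 : (D:ℝ) ≤ ((2:ℝ))^(K*K+K) := by
        have := dPrimorial_le_two_pow K
        exact_mod_cast this
      have h2 : ((2:ℝ))^(K*K+K) ≤ ((2:ℝ))^(2*(K*K)) := by
        apply pow_le_pow_right₀ (by norm_num)
        nlinarith only [hK4]
      have hlog2 : Real.log 2 ≤ 3/4 := by nlinarith only [Real.log_two_lt_d9]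
      have hlog2' : (0:ℝ) ≤ Real.log 2 := Real.log_nonneg (by norm_num)
      have h3 : ((2:ℝ))^(2*(K*K)) = Real.exp ((2*(K*K) : ℕ) * Real.log 2) := by
        rw [← Real.log_pow, Real.exp_log (by positivity)]
      have h4 : ((2*(K*K) : ℕ) : ℝ) * Real.log 2 ≤ L2 := by
        have hKK : ((K:ℝ)) * (K:ℝ) ≤ 4 * u := hKsq
        have e1 : ((2*(K*K) : ℕ) : ℝ) = 2 * ((K:ℝ) * (K:ℝ)) := by push_cast; ring
        rw [e1]
        calc 2 * ((K:ℝ) * (K:ℝ)) * Real.log 2 ≤ 2 * (4*u) * (3/4) := by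
              apply mul_le_mul (by nlinarith only [hKK, hK1]) hlog2 hlog2'
                (by nlinarith only [hu0])
          _ = 6 * u := by ring
          _ ≤ u * u := by nlinarith only [hu8, hu0]
          _ = L2 := huu
      have h5 : ((2:ℝ))^(2*(K*K)) ≤ L1 := by
        rw [h3, ← hexpL2]
        exact Real.exp_le_exp.mpr h4
      have h6 : L1 ≤ x / L := by
        rw [le_div_iff₀ hLpos]
        nlinarith only [hxL4, hL1pos, hLpos]
      linarith
    have hx2x : x ≥ 0 := hx0
    calc (FB1.card : ℝ) ≤ ((N:ℝ)+1) / Real.log ((J:ℝ)+2) + (D:ℝ) := hkey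
      _ ≤ 4*(m:ℝ)*(x/L) + x/L := by linarith
  -- Part B2 estimate
  have hB2part : (FB2.card : ℝ) ≤ x/L + x/L := by
    have hcard : FB2.card ≤ K * ((Finset.range (N+1)).filter (fun b => D ∣ b)).card := by
      calc FB2.card ≤ (((Finset.range K).image (Nat.nth Nat.Prime)) ×ˢ
          ((Finset.range (N+1)).filter (fun b => D ∣ b))).card := Finset.card_image_le
        _ = ((Finset.range K).image (Nat.nth Nat.Prime)).card *
            ((Finset.range (N+1)).filter (fun b => D ∣ b)).card := Finset.card_product _ _
        _ ≤ K * ((Finset.range (N+1)).filter (fun b => D ∣ b)).card := by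
            apply Nat.mul_le_mul_right
            calc ((Finset.range K).image (Nat.nth Nat.Prime)).card
                ≤ (Finset.range K).card := Finset.card_image_le
              _ = K := Finset.card_range K
    have hmult := multiples_count D N hDpos
    have hcard2 : FB2.card ≤ K * (N/D + 1) := by
      calc FB2.card ≤ K * ((Finset.range (N+1)).filter (fun b => D ∣ b)).card := hcard
        _ ≤ K * (N/D + 1) := Nat.mul_le_mul_left K hmult
    have h2K : (2:ℝ)^K ≤ (D:ℝ) := by exact_mod_cast two_pow_le_dPrimorial K
    have hKsq2 : ((K:ℝ)) * (K:ℝ) ≤ (2:ℝ)^K := by exact_mod_cast sq_le_two_pow hK4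
    have hdivle : ((N/D : ℕ) : ℝ) ≤ x / ((K:ℝ) * (K:ℝ)) := by
      have h1 : ((N/D : ℕ) : ℝ) ≤ (N:ℝ) / (D:ℝ) := Nat.cast_div_le
      have hDR : (0:ℝ) < (D:ℝ) := by exact_mod_cast hDpos
      have hKKpos : (0:ℝ) < (K:ℝ) * (K:ℝ) := by nlinarith only [hK1]
      have h2 : (N:ℝ) / (D:ℝ) ≤ x / ((K:ℝ)*(K:ℝ)) := by
        apply div_le_div₀ hx0 (by linarith) hKKpos (by linarith)
      linarith
    have hfin : (FB2.card : ℝ) ≤ (K:ℝ) * (x / ((K:ℝ)*(K:ℝ))) + (K:ℝ) := by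
      have h1 : (FB2.card : ℝ) ≤ (K:ℝ) * (((N/D : ℕ) : ℝ) + 1) := by
        have := hcard2
        have h2 : ((K * (N/D + 1) : ℕ) : ℝ) = (K:ℝ) * (((N/D : ℕ) : ℝ) + 1) := by push_cast; ring
        calc (FB2.card : ℝ) ≤ ((K * (N/D + 1) : ℕ) : ℝ) := by exact_mod_cast this
          _ = (K:ℝ) * (((N/D : ℕ) : ℝ) + 1) := h2
      calc (FB2.card : ℝ) ≤ (K:ℝ) * (((N/D : ℕ) : ℝ) + 1) := h1
        _ = (K:ℝ) * ((N/D : ℕ) : ℝ) + (K:ℝ) := by ring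
        _ ≤ (K:ℝ) * (x / ((K:ℝ)*(K:ℝ))) + (K:ℝ) := by
            have := mul_le_mul_of_nonneg_left hdivle (by linarith : (0:ℝ) ≤ (K:ℝ))
            linarith
    have hterm1 : (K:ℝ) * (x / ((K:ℝ)*(K:ℝ))) ≤ x / L := by
      have hKpos : (0:ℝ) < (K:ℝ) := by linarith
      have hKne : (K:ℝ) ≠ 0 := by linarith
      have e1 : (K:ℝ) * (x / ((K:ℝ)*(K:ℝ))) = x / (K:ℝ) := by
        field_simp
      rw [e1]
      apply div_le_div_of_nonneg_left hx0 hLpos hKL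
    have hterm2 : (K:ℝ) ≤ x / L := by
      rw [le_div_iff₀ hLpos]
      have h1 : (K:ℝ) ≤ 4 * L2 := by nlinarith only [hKsq, huL2, hK1, hu0]
      have h2 : (K:ℝ) * L ≤ 4 * L2 * L := by
        apply mul_le_mul_of_nonneg_right h1 hLpos.le
      have h3 : 4 * L2 * L ≤ 4 * L1 * L := by
        nlinarith only [hL2L1, hLpos]
      linarith [hxL4]
    linarith
  -- conclusion
  have htotal : (Scount (⋃ j ∈ {j : ℕ | 1 ≤ j}, Bset m j) x : ℝ) ≤
      (4*(m:ℝ)+4) * (x / L) := by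
    calc (Scount (⋃ j ∈ {j : ℕ | 1 ≤ j}, Bset m j) x : ℝ)
        ≤ (FA.card : ℝ) + (FB1.card : ℝ) + (FB2.card : ℝ) := hScount
      _ ≤ x/L + (4*(m:ℝ)*(x/L) + x/L) + (x/L + x/L) := by linarith
      _ = (4*(m:ℝ)+4) * (x / L) := by ring
  exact htotal
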